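/- (Generalized chi-squared representation of a Gaussian quadratic form.) Let x be a random vector in ℝⁿ distributed according to the multivariate Gaussian measure N(μ, Σ), where μ ∈ ℝⁿ and Σ ∈ ℝ^{n×n} is symmetric positive definite with symmetric positive-definite square root Σ^{1/2}, and let N ∈ ℝ^{n×n} be symmetric. Let Σ^{1/2} N Σ^{1/2} = U Λ Uᵀ be a spectral decomposition with U ∈ ℝ^{n×n} orthogonal and Λ = diag(λ₁, …, λ_n), and set b = Uᵀ Σ^{-1/2} μ. Then the law of the quadratic form Q(x) = xᵀNx equals the pushforward of the standard Gaussian measure N(0, I_n) on ℝⁿ under the map w ↦ Σ_{i=1}^{n} λ_i (w_i + b_i)². -/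

import Mathlib

/-! Write `x = μ + R w` with `w` standard Gaussian; by uniqueness of positive square roots, `R`
is the square root used by `multivariateGaussian`. Since `μ + R w = R (w + R⁻¹ μ)`, the quadratic
form is `(w + R⁻¹ μ)ᵀ (R N R) (w + R⁻¹ μ) = ∑ i, λᵢ ((Uᵀ w)ᵢ + bᵢ)²`, and `Uᵀ w` is again
standard Gaussian because the standard Gaussian is invariant under orthogonal maps. -/

open MeasureTheory ProbabilityTheory Matrix

/-- The standard Gaussian measure on `ℝⁿ` (iid standard normal coordinates). -/
noncomputable def stdGaussian (n : ℕ) : Measure (Fin n → ℝ) :=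
  Measure.pi fun _ => gaussianReal 0 1

/-- The multivariate Gaussian measure `N(m, Σ)` on `ℝⁿ` with mean `m` and symmetric
positive-definite covariance `Σ`, realized as the pushforward of the standard Gaussian
under `w ↦ m + Σ^{1/2} w`, where `Σ^{1/2}` is the unique positive-semidefinite square
root of `Σ`. -/
noncomputable def multivariateGaussian {n : ℕ} (m : Fin n → ℝ)
    {S : Matrix (Fin n) (Fin n) ℝ} (hS : S.PosDef) : Measure (Fin n → ℝ) :=
  (stdGaussian n).map (fun w => m + ((hS.posSemidef.1.eigenvectorUnitary : Matrix (Fin n) (Fin n) ℝ) *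
    diagonal (RCLike.ofReal ∘ Real.sqrt ∘ hS.posSemidef.1.eigenvalues) *
    (star (hS.posSemidef.1.eigenvectorUnitary : Matrix (Fin n) (Fin n) ℝ))).mulVec w)

open scoped ComplexOrder MatrixOrder in
theorem Matrix.IsHermitian.eq_eigenvectorUnitary_mul_diagonal_sqrt_mul_star
    {𝕜 ι : Type*} [RCLike 𝕜] [Fintype ι] [DecidableEq ι] {S R : Matrix ι ι 𝕜}
    (hS : S.IsHermitian) (hR : R.PosSemidef) (hRS : R * R = S) :
    R = (hS.eigenvectorUnitary : Matrix ι ι 𝕜) *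
      diagonal (RCLike.ofReal ∘ Real.sqrt ∘ hS.eigenvalues) *
      star (hS.eigenvectorUnitary : Matrix ι ι 𝕜) := by
  have hS_nonneg : 0 ≤ S := hRS ▸ hR.isHermitian.isSelfAdjoint.mul_self_nonneg
  rw [← CFC.sqrt_unique hRS hR.nonneg, CFC.sqrt_eq_real_sqrt S hS_nonneg,
    cfcₙ_eq_cfc (hf := Real.continuous_sqrt.continuousOn) (hf0 := Real.sqrt_zero), hS.cfc_eq]
  rfl

theorem Matrix.dotProduct_mul_diagonal_mul_transpose_mulVec {α ι : Type*} [CommRing α]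
    [Fintype ι] [DecidableEq ι] (U : Matrix ι ι α) (lam v : ι → α) :
    v ⬝ᵥ (U * diagonal lam * Uᵀ) *ᵥ v = ∑ i, lam i * (Uᵀ *ᵥ v) i ^ 2 := by
  rw [← mulVec_mulVec, ← mulVec_mulVec, dotProduct_mulVec, ← mulVec_transpose]
  simp only [dotProduct, mulVec_diagonal]
  exact Finset.sum_congr rfl fun i _ => by ring

theorem Matrix.mulVec_dotProduct_mulVec_mulVec {α ι : Type*} [CommRing α] [Fintype ι]
    (A B : Matrix ι ι α) (v : ι → α) :
    A *ᵥ v ⬝ᵥ B *ᵥ (A *ᵥ v) = v ⬝ᵥ (Aᵀ * B * A) *ᵥ v := by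
  rw [← mulVec_mulVec, ← mulVec_mulVec, dotProduct_mulVec v Aᵀ, vecMul_transpose]

open WithLp

theorem stdGaussian_eq_map_ofLp (n : ℕ) :
    stdGaussian n = (ProbabilityTheory.stdGaussian (EuclideanSpace ℝ (Fin n))).map ofLp := by
  rw [← map_pi_eq_stdGaussian, Measure.map_map (by fun_prop) (by fun_prop)]
  exact Measure.map_id.symm

theorem stdGaussian_map_mulVec_of_mem_orthogonalGroup {n : ℕ} {V : Matrix (Fin n) (Fin n) ℝ}
    (hV : V ∈ orthogonalGroup (Fin n) ℝ) :
    (stdGaussian n).map (V *ᵥ ·) = stdGaussian n := by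
  let e := Unitary.linearIsometryEquiv ⟨toEuclideanCLM (𝕜 := ℝ) V, Unitary.map_mem _ hV⟩
  have he : (V *ᵥ ·) ∘ ofLp = ofLp ∘ e := rfl
  rw [stdGaussian_eq_map_ofLp, Measure.map_map (by fun_prop) (by fun_prop), he,
    ← Measure.map_map (by fun_prop) (by fun_prop), stdGaussian_map]

theorem gaussian_quadratic_form_generalized_chi_squared_general {n : ℕ} (μ : Fin n → ℝ)
    {Cov R N U : Matrix (Fin n) (Fin n) ℝ}
    (hCov : Cov.PosDef)
    (hR : R.PosDef) (hRSymm : R.IsSymm) (hRsq : R * R = Cov)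
    (hU : Uᵀ * U = 1)
    (lam : Fin n → ℝ)
    (hSpec : R * N * R = U * diagonal lam * Uᵀ)
    (b : Fin n → ℝ) (hb : b = Uᵀ.mulVec (R⁻¹.mulVec μ)) :
    (multivariateGaussian μ hCov).map (fun x => x ⬝ᵥ N.mulVec x) =
      (stdGaussian n).map (fun w => ∑ i, lam i * (w i + b i) ^ 2) := by
  have hRinv : R * R⁻¹ = 1 := R.mul_nonsing_inv (isUnit_iff_ne_zero.mpr hR.det_pos.ne')
  have hQ : (fun x => x ⬝ᵥ N *ᵥ x) ∘ (fun w => μ + R *ᵥ w) =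
      (fun y => ∑ i, lam i * (y i + b i) ^ 2) ∘ (Uᵀ *ᵥ ·) := by
    funext w
    have hshift : μ + R *ᵥ w = R *ᵥ (w + R⁻¹ *ᵥ μ) := by
      rw [mulVec_add, mulVec_mulVec, hRinv, one_mulVec, add_comm]
    rw [Function.comp_apply, Function.comp_apply, hshift, mulVec_dotProduct_mulVec_mulVec,
      hRSymm.eq, hSpec, dotProduct_mul_diagonal_mul_transpose_mulVec, mulVec_add, hb]
    simp only [Pi.add_apply]
  have hUT : Uᵀ ∈ orthogonalGroup (Fin n) ℝ := by
    rwa [mem_orthogonalGroup_iff, transpose_transpose]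
  rw [_root_.multivariateGaussian,
    ← hCov.isHermitian.eq_eigenvectorUnitary_mul_diagonal_sqrt_mul_star hR.posSemidef hRsq,
    Measure.map_map (by fun_prop) (by fun_prop), hQ,
    ← Measure.map_map (by fun_prop) (by fun_prop),
    stdGaussian_map_mulVec_of_mem_orthogonalGroup hUT]

/-- Generalized chi-squared representation of a Gaussian quadratic form: if
`x ~ N(μ, Σ)` with `Σ` symmetric positive definite with symmetric positive-definite
square root `R`, `N` is symmetric, `R N R = U Λ Uᵀ` is a spectral decomposition with
`U` orthogonal and `Λ = diag(λ)`, and `b = Uᵀ R⁻¹ μ`, then the law of `Q(x) = xᵀNx`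
is the pushforward of the standard Gaussian `N(0, I)` under
`w ↦ ∑ i, λᵢ (wᵢ + bᵢ)²`. -/
theorem gaussian_quadratic_form_generalized_chi_squared {n : ℕ} (μ : Fin n → ℝ)
    {Cov R N U : Matrix (Fin n) (Fin n) ℝ}
    (hCov : Cov.PosDef) (hCovSymm : Cov.IsSymm)
    (hR : R.PosDef) (hRSymm : R.IsSymm) (hRsq : R * R = Cov)
    (hNSymm : N.IsSymm)
    (hU : Uᵀ * U = 1) (hU' : U * Uᵀ = 1)
    (lam : Fin n → ℝ)
    (hSpec : R * N * R = U * diagonal lam * Uᵀ)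
    (b : Fin n → ℝ) (hb : b = Uᵀ.mulVec (R⁻¹.mulVec μ)) :
    (multivariateGaussian μ hCov).map (fun x => x ⬝ᵥ N.mulVec x) =
      (stdGaussian n).map (fun w => ∑ i, lam i * (w i + b i) ^ 2) :=
  gaussian_quadratic_form_generalized_chi_squared_general μ hCov hR hRSymm hRsq hU lam hSpec b hb
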